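/- arXiv:1209.1155 — 2 statements merged into one kernel-verified Lean document; each statement's English description precedes it below -/
import Mathlib

section
/- Let k be a field of characteristic p > 0 and let a be the 2-dimensional abelian p-Lie algebra over k with basis h, x satisfying h^[p] = 0 and x^[p] = 0. Then the element J := exp(h ⊗ x) = Σ_{i=0}^{p-1} (h^i ⊗ x^i)/i! is a Drinfeld twist for the restricted universal enveloping algebra u(a), i.e., J is invertible, (Δ⊗id)(J)(J⊗1) = (id⊗Δ)(J)(1⊗J), and (ε⊗id)(J) = (id⊗ε)(J) = 1. -/
/-!
`J` is the truncated exponential `exp (h ⊗ x)`. In characteristic `p` the truncated exponential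
still satisfies `exp (a + b) = exp a * exp b` for commuting `a`, `b` with `a ^ i * b ^ j = 0`
whenever `i + j ≥ p`: these are exactly the binomial terms lost by truncation. In particular
`exp (-t)` inverts `exp t` when `t ^ p = 0`. Since `Δ` and `ε` are algebra maps and `h`, `x` are
primitive, `(Δ ⊗ id) J = exp (h₁x₃) exp (h₂x₃)` and `(id ⊗ Δ) J = exp (h₁x₂) exp (h₁x₃)`
(subscripts are tensor legs), so the cocycle identity only reorders the pairwise commuting factors
`exp (h₁x₃)`, `exp (h₂x₃)`, `exp (h₁x₂)`; the counit conditions follow from `ε h = ε x = 0`.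
-/

open TensorProduct Coalgebra Finset

open scoped Nat

section TruncExp

variable (k : Type*) {A B : Type*} [Field k] [Semiring A] [Algebra k A] [Semiring B] [Algebra k B]
  (p : ℕ)

noncomputable def truncExp (t : A) : A := ∑ i ∈ range p, (i ! : k)⁻¹ • t ^ i

variable {k p}

lemma map_truncExp {F : Type*} [FunLike F A B] [AlgHomClass F k A B] (f : F) (t : A) :
    f (truncExp k p t) = truncExp k p (f t) := by
  simp only [truncExp, map_sum, map_smul, map_pow]

lemma truncExp_zero (hp : 0 < p) : truncExp k p (0 : A) = 1 := by
  rw [truncExp, sum_eq_single_of_mem 0 (mem_range.mpr hp) fun i _ hi ↦ by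
    rw [zero_pow hi, smul_zero]]
  simp

lemma Commute.truncExp {a b : A} (hab : Commute a b) :
    Commute (truncExp k p a) (truncExp k p b) :=
  .sum_left _ _ _ fun _ _ ↦ .sum_right _ _ _ fun _ _ ↦
    ((hab.pow_pow _ _).smul_left _).smul_right _

variable [Fact p.Prime] [CharP k p]

lemma inv_factorial_mul_choose {n m : ℕ} (hn : n < p) (hm : m ≤ n) :
    (n ! : k)⁻¹ * n.choose m = (m ! : k)⁻¹ * ((n - m)! : k)⁻¹ := by
  have hfac {i : ℕ} (hi : i ≤ n) : (i ! : k) ≠ 0 :=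
    ((IsUnit.natCast_factorial_iff_of_charP p).mpr (hi.trans_lt hn)).ne_zero
  have := hfac hm; have := hfac (n.sub_le m); have := hfac le_rfl
  field_simp
  rw [← Nat.cast_mul, ← Nat.cast_mul, Nat.choose_mul_factorial_mul_factorial hm]

lemma truncExp_add {a b : A} (hab : Commute a b)
    (hvanish : ∀ i j, p ≤ i + j → a ^ i * b ^ j = 0) :
    truncExp k p (a + b) = truncExp k p a * truncExp k p b := by
  set f : ℕ → ℕ → A := fun i j ↦ ((i ! : k)⁻¹ * (j ! : k)⁻¹) • (a ^ i * b ^ j)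
  calc truncExp k p (a + b)
      = ∑ n ∈ range p, ∑ m ∈ range (n + 1), f m (n - m) := by
        refine sum_congr rfl fun n hn ↦ ?_
        rw [hab.add_pow, smul_sum]
        refine sum_congr rfl fun m hm ↦ ?_
        rw [← nsmul_eq_mul', ← Nat.cast_smul_eq_nsmul k, smul_smul,
          inv_factorial_mul_choose (mem_range.mp hn) (Nat.lt_succ_iff.mp (mem_range.mp hm))]
    _ = ∑ i ∈ range p, ∑ j ∈ range (p - i), f i j := sum_range_diag_flip p f
    _ = ∑ i ∈ range p, ∑ j ∈ range p, f i j := by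
        refine sum_congr rfl fun i _ ↦ sum_subset (range_subset_range.mpr (p.sub_le i)) ?_
        intro j _ hj
        rw [mem_range, not_lt, Nat.sub_le_iff_le_add] at hj
        simp only [f, hvanish i j (by omega), smul_zero]
    _ = truncExp k p a * truncExp k p b := by
        simp only [truncExp, sum_mul_sum, f, smul_mul_smul_comm]

lemma isUnit_truncExp {R : Type*} [Ring R] [Algebra k R] {t : R} (ht : t ^ p = 0) :
    IsUnit (truncExp k p t) := by
  have hp : 0 < p := (Fact.out : p.Prime).pos
  refine isUnit_iff_exists.mpr ⟨truncExp k p (-t), ?_, ?_⟩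
  · rw [← truncExp_add (Commute.refl t).neg_right, add_neg_cancel, truncExp_zero hp]
    intro i j hij
    rw [neg_pow', ← mul_assoc, ← pow_add, pow_eq_zero_of_le hij ht, zero_mul]
  · rw [← truncExp_add (Commute.refl t).neg_left, neg_add_cancel, truncExp_zero hp]
    intro i j hij
    rw [neg_pow, mul_assoc, ← pow_add, pow_eq_zero_of_le hij ht, mul_zero]

end TruncExp

section Tensor

variable {k A B : Type*} [Field k] [Semiring A] [Algebra k A] [Semiring B] [Algebra k B] {p : ℕ}

lemma truncExp_tmul_one (t : A) :
    truncExp k p t ⊗ₜ[k] (1 : B) = truncExp k p (t ⊗ₜ[k] (1 : B)) :=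
  map_truncExp (Algebra.TensorProduct.includeLeft : A →ₐ[k] A ⊗[k] B) t

lemma one_tmul_truncExp (t : B) :
    (1 : A) ⊗ₜ[k] truncExp k p t = truncExp k p ((1 : A) ⊗ₜ[k] t) :=
  map_truncExp (Algebra.TensorProduct.includeRight : B →ₐ[k] A ⊗[k] B) t

lemma truncExp_legs_cocycle [Fact p.Prime] [CharP k p] {h x : A} (hcomm : Commute h x)
    (hhp : h ^ p = 0) (hxp : x ^ p = 0) :
    truncExp k p (h ⊗ₜ[k] ((1 : A) ⊗ₜ[k] x) + (1 : A) ⊗ₜ[k] (h ⊗ₜ[k] x)) *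
        truncExp k p (h ⊗ₜ[k] (x ⊗ₜ[k] (1 : A))) =
      truncExp k p (h ⊗ₜ[k] (x ⊗ₜ[k] (1 : A)) + h ⊗ₜ[k] ((1 : A) ⊗ₜ[k] x)) *
        truncExp k p ((1 : A) ⊗ₜ[k] (h ⊗ₜ[k] x)) := by
  set a : A ⊗[k] (A ⊗[k] A) := h ⊗ₜ ((1 : A) ⊗ₜ x)
  set b : A ⊗[k] (A ⊗[k] A) := (1 : A) ⊗ₜ (h ⊗ₜ x)
  set c : A ⊗[k] (A ⊗[k] A) := h ⊗ₜ (x ⊗ₜ (1 : A))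
  have hab : Commute a b := by
    simp [a, b, Commute, SemiconjBy, Algebra.TensorProduct.tmul_mul_tmul]
  have hac : Commute a c := by
    simp [a, c, Commute, SemiconjBy, Algebra.TensorProduct.tmul_mul_tmul]
  have hbc : Commute b c := by
    simp [b, c, Commute, SemiconjBy, Algebra.TensorProduct.tmul_mul_tmul, hcomm.eq]
  have hvab (i j : ℕ) (hij : p ≤ i + j) : a ^ i * b ^ j = 0 := by
    simp [a, b, Algebra.TensorProduct.tmul_pow, Algebra.TensorProduct.tmul_mul_tmul, ← pow_add,
      pow_eq_zero_of_le hij hxp]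
  have hvca (i j : ℕ) (hij : p ≤ i + j) : c ^ i * a ^ j = 0 := by
    simp [a, c, Algebra.TensorProduct.tmul_pow, Algebra.TensorProduct.tmul_mul_tmul, ← pow_add,
      pow_eq_zero_of_le hij hhp]
  rw [truncExp_add hab hvab, truncExp_add hac.symm hvca, mul_assoc, hbc.truncExp.eq, ← mul_assoc,
    hac.truncExp.eq]

end Tensor

lemma Bialgebra.counit_eq_zero_of_comul_eq {R H : Type*} [CommRing R] [Ring H] [Bialgebra R H]
    {y : H} (hy : comul (R := R) y = y ⊗ₜ 1 + 1 ⊗ₜ y) : counit (R := R) y = 0 := by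
  have h := Coalgebra.rTensor_counit_comul (R := R) y
  rw [hy, map_add, LinearMap.rTensor_tmul, LinearMap.rTensor_tmul, Bialgebra.counit_one,
    add_eq_right] at h
  have h' := congrArg (fun z ↦ _root_.TensorProduct.lid R R (LinearMap.lTensor R counit z)) h
  simp only [LinearMap.lTensor_tmul, Bialgebra.counit_one, _root_.TensorProduct.lid_tmul,
    map_zero] at h'
  simpa using h'

section Bialgebra

variable {k H : Type*} [Field k] [Semiring H] [Bialgebra k H] {p : ℕ}

lemma map_comul_id_truncExp (t : H ⊗[k] H) :
    map (comul (R := k)) LinearMap.id (truncExp k p t) =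
      truncExp k p (map (comul (R := k)) LinearMap.id t) :=
  map_truncExp (Algebra.TensorProduct.map (Bialgebra.comulAlgHom k H) (AlgHom.id k H)) t

lemma map_id_comul_truncExp (t : H ⊗[k] H) :
    map LinearMap.id (comul (R := k)) (truncExp k p t) =
      truncExp k p (map LinearMap.id (comul (R := k)) t) :=
  map_truncExp (Algebra.TensorProduct.map (AlgHom.id k H) (Bialgebra.comulAlgHom k H)) t

lemma lid_map_counit_id_truncExp (t : H ⊗[k] H) :
    TensorProduct.lid k H (map (counit (R := k)) LinearMap.id (truncExp k p t)) =
      truncExp k p (TensorProduct.lid k H (map (counit (R := k)) LinearMap.id t)) :=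
  map_truncExp ((Algebra.TensorProduct.lid k H).toAlgHom.comp
    (Algebra.TensorProduct.map (Bialgebra.counitAlgHom k H) (AlgHom.id k H))) t

lemma rid_map_id_counit_truncExp (t : H ⊗[k] H) :
    TensorProduct.rid k H (map LinearMap.id (counit (R := k)) (truncExp k p t)) =
      truncExp k p (TensorProduct.rid k H (map LinearMap.id (counit (R := k)) t)) :=
  map_truncExp ((Algebra.TensorProduct.rid k k H).toAlgHom.comp
    (Algebra.TensorProduct.map (AlgHom.id k H) (Bialgebra.counitAlgHom k H))) t

end Bialgebra

/-- In the restricted enveloping algebra of the 2-dimensional abelian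
`p`-Lie algebra with basis `h, x`, `h^[p] = x^[p] = 0` (abstractly: a cocommutative Hopf
algebra containing commuting primitive elements `h, x` with `h^p = x^p = 0`), the element
`J = ∑_{i<p} (h^i ⊗ x^i)/i!` is a Drinfeld twist. -/
theorem stmt_2 {k : Type} [Field k] (p : ℕ) [Fact p.Prime] [CharP k p]
    {H : Type} [Ring H] [HopfAlgebra k H]
    (h x : H) (hcomm : Commute h x) (hhp : h ^ p = 0) (hxp : x ^ p = 0)
    (hprim : comul (R := k) h = h ⊗ₜ (1 : H) + (1 : H) ⊗ₜ h)
    (xprim : comul (R := k) x = x ⊗ₜ (1 : H) + (1 : H) ⊗ₜ x) :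
    letI J : H ⊗[k] H := ∑ i ∈ range p, ((i.factorial : k)⁻¹) • ((h ^ i) ⊗ₜ (x ^ i))
    IsUnit J ∧
    ((Algebra.TensorProduct.assoc k k k H H H)
        ((TensorProduct.map (comul (R := k)) LinearMap.id J) * (J ⊗ₜ (1 : H)))
      = (TensorProduct.map LinearMap.id (comul (R := k)) J) * ((1 : H) ⊗ₜ J)) ∧
    TensorProduct.lid k H (TensorProduct.map (counit (R := k)) LinearMap.id J) = 1 ∧
    TensorProduct.rid k H (TensorProduct.map LinearMap.id (counit (R := k)) J) = 1 := by
  have hJ : ∑ i ∈ range p, ((i.factorial : k)⁻¹) • ((h ^ i) ⊗ₜ[k] (x ^ i)) =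
      truncExp k p (h ⊗ₜ[k] x) := by
    simp only [truncExp, Algebra.TensorProduct.tmul_pow]
  have hp : 0 < p := (Fact.out : p.Prime).pos
  rw [hJ]
  refine ⟨isUnit_truncExp (by rw [Algebra.TensorProduct.tmul_pow, hxp, tmul_zero]), ?_, ?_, ?_⟩
  · rw [map_mul, map_comul_id_truncExp, map_truncExp, truncExp_tmul_one, map_truncExp,
      map_id_comul_truncExp, one_tmul_truncExp]
    simpa [hprim, xprim, add_tmul, tmul_add] using truncExp_legs_cocycle hcomm hhp hxp
  · simp [lid_map_counit_id_truncExp, Bialgebra.counit_eq_zero_of_comul_eq hprim, truncExp_zero hp]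
  · simp [rid_map_id_counit_truncExp, Bialgebra.counit_eq_zero_of_comul_eq xprim, truncExp_zero hp]
end

section
/- Let k be a field of characteristic p > 0. The truncated Weyl algebra k[x,y]/(xy − yx − 1, x^p, y^p) is a simple algebra (it has no nonzero proper two-sided ideals) of dimension p². -/
open FreeAlgebra

/-- The defining relations of the truncated Weyl algebra
`k⟨x,y⟩/(xy − yx − 1, x^p, y^p)`. -/
inductive WeylRel (k : Type) [Field k] (p : ℕ) :
    FreeAlgebra k (Fin 2) → FreeAlgebra k (Fin 2) → Prop
  | comm : WeylRel k p (ι k (0 : Fin 2) * ι k (1 : Fin 2))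
      (ι k (1 : Fin 2) * ι k (0 : Fin 2) + 1)
  | xp : WeylRel k p ((ι k (0 : Fin 2)) ^ p) 0
  | yp : WeylRel k p ((ι k (1 : Fin 2)) ^ p) 0

/-!
On `k[t]/(t^p)`, the operators `X = d/dt` and `Y = t·` satisfy `XY = YX + 1` (in characteristic
`p`, as `d/dt (t^p) = 0`) and `X^p = Y^p = 0`, so they give a representation of the truncated Weyl
algebra by `p × p` matrices. It is surjective: `YX` is diagonal with entries `0, 1, …, p-1`, so by
Fermat `1 - (YX)^(p-1)` is the matrix unit `E₀₀`, and left multiplication by `Y` and right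
multiplication by `X` move it to every other matrix unit. Conversely the monomials `y^i x^j`,
`i, j < p`, span the algebra, since their span contains `1` and is stable under left
multiplication by `x` and `y`. Hence the dimension is `p²`, the representation is an isomorphism,
and the algebra is simple because the matrix algebra is.
-/

open Matrix

theorem Submodule.span_eq_top_of_mul_mem {R A : Type*} [CommSemiring R] [Semiring A]
    [Algebra R A] {s t : Set A} (hs : Algebra.adjoin R s = ⊤) (h1 : 1 ∈ span R t)
    (h : ∀ a ∈ s, ∀ m ∈ t, a * m ∈ span R t) : span R t = ⊤ := by
  have hstable (a : A) : ∀ m ∈ span R t, a * m ∈ span R t := by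
    have ha : a ∈ Algebra.adjoin R s := hs ▸ Algebra.mem_top
    induction ha using Algebra.adjoin_induction with
    | mem a ha =>
      exact fun m hm ↦ span_le (p := (span R t).comap (LinearMap.mulLeft R a)) |>.mpr
        (fun m hm ↦ h a ha m hm) hm
    | algebraMap r => exact fun m hm ↦ by rw [← Algebra.smul_def]; exact smul_mem _ r hm
    | add a b _ _ ha hb => exact fun m hm ↦ by rw [add_mul]; exact add_mem (ha m hm) (hb m hm)
    | mul a b _ _ ha hb => exact fun m hm ↦ by rw [mul_assoc]; exact ha _ (hb m hm)
  exact eq_top_iff'.mpr fun a ↦ by simpa using hstable a 1 h1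

theorem mul_pow_succ_of_mul_eq_mul_add_one {A : Type*} [Semiring A] {a b : A}
    (h : a * b = b * a + 1) (n : ℕ) : a * b ^ (n + 1) = b ^ (n + 1) * a + (n + 1) • b ^ n := by
  induction n with
  | zero => simpa using h
  | succ n ih =>
    calc a * b ^ (n + 2) = (a * b ^ (n + 1)) * b := by rw [mul_assoc, ← pow_succ]
      _ = b ^ (n + 1) * (a * b) + (n + 1) • b ^ (n + 1) := by
        rw [ih, add_mul, mul_assoc, smul_mul_assoc, ← pow_succ]
      _ = b ^ (n + 2) * a + (n + 2) • b ^ (n + 1) := by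
        rw [h, mul_add, mul_one, ← mul_assoc, ← pow_succ, add_assoc, ← succ_nsmul']

section Representation

variable (R : Type*) [CommSemiring R] (p : ℕ)

-- `d/dt` and `t·` on `k[t]/(t^p)` in the basis `1, t, …, t^(p-1)`.
def derivMatrix : Matrix (Fin p) (Fin p) R :=
  of fun a b ↦ if (a : ℕ) + 1 = b then (b : R) else 0

def shiftMatrix : Matrix (Fin p) (Fin p) R :=
  of fun a b ↦ if (a : ℕ) = b + 1 then 1 else 0

theorem shiftMatrix_mul_derivMatrix :
    shiftMatrix R p * derivMatrix R p = diagonal fun i : Fin p ↦ ((i : ℕ) : R) := by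
  ext ⟨_ | n, ha⟩ b
  · simp [mul_apply, shiftMatrix, diagonal_apply]
  · have hn (j : Fin p) : n = (j : ℕ) ↔ j = ⟨n, by omega⟩ := by simp [Fin.ext_iff, eq_comm]
    simp only [mul_apply, shiftMatrix, derivMatrix, diagonal_apply, of_apply,
      Nat.add_right_cancel_iff, hn]
    rw [Fintype.sum_eq_single ⟨n, by omega⟩ fun j hj ↦ by simp [hj]]
    simp only [Fin.ext_iff]
    split_ifs <;> simp_all

theorem derivMatrix_mul_shiftMatrix [CharP R p] :
    derivMatrix R p * shiftMatrix R p = shiftMatrix R p * derivMatrix R p + 1 := by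
  rw [shiftMatrix_mul_derivMatrix, ← diagonal_one, diagonal_add]
  ext ⟨n, ha⟩ b
  rcases lt_or_ge (n + 1) p with hn | hn
  · have hj (j : Fin p) : n + 1 = (j : ℕ) ↔ j = ⟨n + 1, hn⟩ := by simp [Fin.ext_iff, eq_comm]
    simp only [mul_apply, shiftMatrix, derivMatrix, diagonal_apply, of_apply, hj]
    rw [Fintype.sum_eq_single ⟨n + 1, hn⟩ fun j hj ↦ by simp [hj]]
    simp [Fin.ext_iff]
  · have hp : (n : R) + 1 = 0 := by
      exact_mod_cast (show n + 1 = p by omega) ▸ CharP.cast_eq_zero R p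
    have hj (j : Fin p) : n + 1 ≠ (j : ℕ) := by omega
    simp [mul_apply, derivMatrix, diagonal_apply, hj, hp]

theorem pow_eq_zero_of_supported_on_superdiagonal {M : Matrix (Fin p) (Fin p) R}
    (hM : ∀ a b : Fin p, (a : ℕ) + 1 ≠ b → M a b = 0) : M ^ p = 0 := by
  have key (m : ℕ) : ∀ a b : Fin p, (a : ℕ) + m ≠ b → (M ^ m) a b = 0 := by
    induction m with
    | zero => exact fun a b hab ↦ one_apply_ne fun h ↦ hab (by simp [h])
    | succ m ih =>
      intro a b hab
      rw [pow_succ, mul_apply]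
      refine Finset.sum_eq_zero fun c _ ↦ ?_
      by_cases hc : (a : ℕ) + m = c
      · rw [hM c b (by omega), mul_zero]
      · rw [ih a c hc, zero_mul]
  ext a b
  exact key p a b (by omega)

theorem derivMatrix_pow : derivMatrix R p ^ p = 0 :=
  pow_eq_zero_of_supported_on_superdiagonal R p fun a b hab ↦ by simp [derivMatrix, hab]

theorem shiftMatrix_pow : shiftMatrix R p ^ p = 0 := by
  rw [← transpose_eq_zero, transpose_pow]
  exact pow_eq_zero_of_supported_on_superdiagonal R p fun a b hab ↦ by
    simp [shiftMatrix, Ne.symm hab]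

theorem shiftMatrix_mul_single {i : ℕ} (hi : i + 1 < p) (j : Fin p) (c : R) :
    shiftMatrix R p * single ⟨i, by omega⟩ j c = single ⟨i + 1, hi⟩ j c := by
  ext a b
  rw [mul_apply, Fintype.sum_eq_single ⟨i, by omega⟩ fun l hl ↦ by simp [Ne.symm hl]]
  simp only [single_apply, shiftMatrix, of_apply, Fin.ext_iff]
  grind

theorem single_mul_derivMatrix (i : Fin p) {j : ℕ} (hj : j + 1 < p) (c : R) :
    single i ⟨j, by omega⟩ c * derivMatrix R p = single i ⟨j + 1, hj⟩ (c * (j + 1 : ℕ)) := by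
  ext a ⟨m, hm⟩
  rw [mul_apply, Fintype.sum_eq_single ⟨j, by omega⟩ fun l hl ↦ by simp [Ne.symm hl]]
  rcases eq_or_ne m (j + 1) with rfl | hmj
  · simp [single_apply, derivMatrix]
  · simp [single_apply, derivMatrix, Fin.ext_iff, Ne.symm hmj]

end Representation

section Generation

variable (k : Type*) [Field k] (p : ℕ) [Fact p.Prime] [CharP k p]

theorem natCast_pow_sub_one_eq_one {i : ℕ} (hi : ¬p ∣ i) : (i : k) ^ (p - 1) = 1 := by
  have h := ZMod.pow_card_sub_one_eq_one (p := p) (a := i)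
    (by rwa [Ne, ZMod.natCast_eq_zero_iff])
  simpa using congrArg (ZMod.castHom (dvd_refl p) k) h

theorem single_zero_zero_eq_one_sub :
    single (0 : Fin p) 0 (1 : k) = 1 - (shiftMatrix k p * derivMatrix k p) ^ (p - 1) := by
  rw [shiftMatrix_mul_derivMatrix, diagonal_pow, ← diagonal_one, diagonal_sub,
    ← diagonal_single]
  congr 1
  ext i
  rcases eq_or_ne i 0 with rfl | hi
  · have : p - 1 ≠ 0 := by have := (Fact.out : p.Prime).two_le; omega
    simp [this]
  · have hp : ¬p ∣ (i : ℕ) := fun h ↦ hi (Fin.ext (Nat.eq_zero_of_dvd_of_lt h i.isLt))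
    simp [hi, natCast_pow_sub_one_eq_one k p hp]

theorem adjoin_derivMatrix_shiftMatrix :
    Algebra.adjoin k {derivMatrix k p, shiftMatrix k p} = ⊤ := by
  set S := Algebra.adjoin k {derivMatrix k p, shiftMatrix k p}
  have hX : derivMatrix k p ∈ S := Algebra.subset_adjoin (by simp)
  have hY : shiftMatrix k p ∈ S := Algebra.subset_adjoin (by simp)
  have h00 : single (0 : Fin p) 0 (1 : k) ∈ S := by
    rw [single_zero_zero_eq_one_sub]
    exact sub_mem (one_mem S) (pow_mem (mul_mem hY hX) _)
  have hcol (i : ℕ) (hi : i < p) : single ⟨i, hi⟩ (0 : Fin p) (1 : k) ∈ S := by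
    induction i with
    | zero => exact h00
    | succ i ih => rw [← shiftMatrix_mul_single k p hi]; exact mul_mem hY (ih (by omega))
  have hall (i : Fin p) (j : ℕ) (hj : j < p) : single i ⟨j, hj⟩ (1 : k) ∈ S := by
    induction j with
    | zero => exact hcol i i.isLt
    | succ j ih =>
      have hj0 : ((j + 1 : ℕ) : k) ≠ 0 := by
        rw [Ne, CharP.cast_eq_zero_iff k p]
        exact fun h ↦ absurd (Nat.le_of_dvd (by omega) h) (by omega)
      have := S.smul_mem (mul_mem (ih (by omega)) hX) ((j + 1 : ℕ) : k)⁻¹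
      rwa [single_mul_derivMatrix, smul_single, one_mul, smul_eq_mul,
        inv_mul_cancel₀ hj0] at this
  rw [eq_top_iff]
  rintro M -
  rw [matrix_eq_sum_single M]
  refine sum_mem fun i _ ↦ sum_mem fun j _ ↦ ?_
  simpa [smul_single] using S.smul_mem (hall i j j.isLt) (M i j)

end Generation

namespace WeylRel

variable (k : Type) [Field k] (p : ℕ)

noncomputable def x : RingQuot (WeylRel k p) := RingQuot.mkAlgHom k (WeylRel k p) (ι k 0)

noncomputable def y : RingQuot (WeylRel k p) := RingQuot.mkAlgHom k (WeylRel k p) (ι k 1)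

theorem x_mul_y : x k p * y k p = y k p * x k p + 1 := by
  simpa [x, y] using RingQuot.mkAlgHom_rel k (WeylRel.comm (k := k) (p := p))

theorem x_pow : x k p ^ p = 0 := by
  simpa [x] using RingQuot.mkAlgHom_rel k (WeylRel.xp (k := k) (p := p))

theorem y_pow : y k p ^ p = 0 := by
  simpa [y] using RingQuot.mkAlgHom_rel k (WeylRel.yp (k := k) (p := p))

theorem adjoin_x_y : Algebra.adjoin k {x k p, y k p} = ⊤ := by
  have h : {x k p, y k p} = RingQuot.mkAlgHom k (WeylRel k p) '' Set.range (ι k) := by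
    rw [← Set.range_comp]
    ext
    simp [Fin.exists_fin_two, x, y, eq_comm]
  rw [h, ← AlgHom.map_adjoin, FreeAlgebra.adjoin_range_ι, Algebra.map_top,
    (AlgHom.range_eq_top _).mpr (RingQuot.mkAlgHom_surjective k _)]

section Lift

variable {A : Type*} [Semiring A] [Algebra k A] {a b : A}

noncomputable def lift (hab : a * b = b * a + 1) (ha : a ^ p = 0) (hb : b ^ p = 0) :
    RingQuot (WeylRel k p) →ₐ[k] A :=
  RingQuot.liftAlgHom k ⟨FreeAlgebra.lift k ![a, b], fun _ _ h ↦ by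
    cases h <;> simpa⟩

variable (hab : a * b = b * a + 1) (ha : a ^ p = 0) (hb : b ^ p = 0)

theorem lift_x : lift k p hab ha hb (x k p) = a := by simp [lift, x]

theorem lift_y : lift k p hab ha hb (y k p) = b := by simp [lift, y]

end Lift

def monomials : Set (RingQuot (WeylRel k p)) :=
  Set.range fun ij : Fin p × Fin p ↦ y k p ^ (ij.1 : ℕ) * x k p ^ (ij.2 : ℕ)

theorem y_pow_mul_x_pow_mem_span (i j : ℕ) :
    y k p ^ i * x k p ^ j ∈ Submodule.span k (monomials k p) := by
  rcases lt_or_ge i p with hi | hi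
  · rcases lt_or_ge j p with hj | hj
    · exact Submodule.subset_span ⟨(⟨i, hi⟩, ⟨j, hj⟩), rfl⟩
    · simp [pow_eq_zero_of_le hj (x_pow k p)]
  · simp [pow_eq_zero_of_le hi (y_pow k p)]

theorem span_monomials : Submodule.span k (monomials k p) = ⊤ := by
  refine Submodule.span_eq_top_of_mul_mem (adjoin_x_y k p)
    (by simpa using y_pow_mul_x_pow_mem_span k p 0 0) ?_
  rintro a (rfl | rfl) _ ⟨⟨⟨i, _⟩, ⟨j, _⟩⟩, rfl⟩ <;> dsimp only
  · cases i with
    | zero => simpa [← pow_succ'] using y_pow_mul_x_pow_mem_span k p 0 (j + 1)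
    | succ i =>
      rw [← mul_assoc, mul_pow_succ_of_mul_eq_mul_add_one (x_mul_y k p), add_mul, mul_assoc,
        ← pow_succ', smul_mul_assoc]
      exact add_mem (y_pow_mul_x_pow_mem_span k p _ _)
        (Submodule.smul_of_tower_mem _ _ (y_pow_mul_x_pow_mem_span k p _ _))
  · rw [← mul_assoc, ← pow_succ']
    exact y_pow_mul_x_pow_mem_span k p _ _

instance : Module.Finite k (RingQuot (WeylRel k p)) :=
  ⟨⟨(Set.finite_range _).toFinset, by rw [Set.Finite.coe_toFinset]; exact span_monomials k p⟩⟩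

theorem finrank_le : Module.finrank k (RingQuot (WeylRel k p)) ≤ p ^ 2 := by
  have h := finrank_range_le_card (R := k) fun ij : Fin p × Fin p ↦
    y k p ^ (ij.1 : ℕ) * x k p ^ (ij.2 : ℕ)
  rwa [Set.finrank, ← monomials, span_monomials, finrank_top, Fintype.card_prod,
    Fintype.card_fin, ← sq] at h

section Matrix

variable [Fact p.Prime] [CharP k p]

noncomputable def toMatrix : RingQuot (WeylRel k p) →ₐ[k] Matrix (Fin p) (Fin p) k :=
  lift k p (derivMatrix_mul_shiftMatrix k p) (derivMatrix_pow k p) (shiftMatrix_pow k p)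

theorem toMatrix_surjective : Function.Surjective (toMatrix k p) := by
  rw [← AlgHom.range_eq_top, ← Algebra.map_top, ← adjoin_x_y, AlgHom.map_adjoin, Set.image_pair,
    toMatrix, lift_x, lift_y]
  exact adjoin_derivMatrix_shiftMatrix k p

theorem finrank_eq : Module.finrank k (RingQuot (WeylRel k p)) = p ^ 2 := by
  refine (finrank_le k p).antisymm ?_
  simpa [Module.finrank_matrix, sq] using
    LinearMap.finrank_le_finrank_of_surjective (f := (toMatrix k p).toLinearMap)
      (toMatrix_surjective k p)

noncomputable def equivMatrix : RingQuot (WeylRel k p) ≃ₐ[k] Matrix (Fin p) (Fin p) k :=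
  AlgEquiv.ofBijective (toMatrix k p)
    ⟨(LinearMap.injective_iff_surjective_of_finrank_eq_finrank (f := (toMatrix k p).toLinearMap)
      (by simp [finrank_eq, sq, Module.finrank_matrix])).mpr (toMatrix_surjective k p),
      toMatrix_surjective k p⟩

end Matrix

end WeylRel

/-- over a field of characteristic `p > 0`, the truncated Weyl algebra
`k[x,y]/(xy − yx − 1, x^p, y^p)` is a simple algebra of dimension `p²`. -/
theorem stmt_3 {k : Type} [Field k] (p : ℕ) [Fact p.Prime] [CharP k p] :
    IsSimpleRing (RingQuot (WeylRel k p)) ∧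
    Module.finrank k (RingQuot (WeylRel k p)) = p ^ 2 :=
  ⟨.of_ringEquiv (WeylRel.equivMatrix k p).symm.toRingEquiv inferInstance,
    WeylRel.finrank_eq k p⟩
end
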